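/- Let φ: [1,∞) → (0,∞) be C¹, strictly increasing, strictly concave, with φ(x) ≤ x, φ(x)/x nonincreasing. Let H_φ⁻¹ be the inverse of H_φ(u) = ∫₁ᵘ ds/φ(s). Let V ≥ 1, K ≥ 0, t ≥ 0, and let c ∈ {0,1}. If D is any real number with D ≤ −φ(V) + K·c, then 2φ(H_φ⁻¹(H_φ(V)+t)) + 2·(φ(H_φ⁻¹(H_φ(V)+t))/φ(V))·D − φ(H_φ⁻¹(t)) ≤ 2K·H_φ⁻¹(t)·c − φ(H_φ⁻¹(t)). -/

import Mathlib

/-! With `A = H_φ⁻¹(t)` and `W = H_φ⁻¹(H_φ(V) + t)`, the substitution `s = V u` and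
`φ(V u) ≤ V φ(u)` (from the monotonicity of `φ(x)/x`) give `H_φ(V) + H_φ(A) ≤ H_φ(V A)`,
hence `V ≤ W ≤ V A` and `φ(W) ≤ (W / V) φ(V) ≤ A φ(V)`. The claim is then linear in `D`
with the nonnegative coefficient `φ(W) / φ(V) ≤ A`. -/

open MeasureTheory intervalIntegral Set

lemma strictMonoOn_integral_of_pos {f : ℝ → ℝ} {a : ℝ} (hf : ContinuousOn f (Ici a))
    (hpos : ∀ x ≥ a, 0 < f x) : StrictMonoOn (fun u => ∫ s in a..u, f s) (Ici a) := by
  intro x hx y hy hxy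
  have hint : ∀ b ∈ Ici a, IntervalIntegrable f volume a b := fun b hb =>
    (hf.mono fun z hz => le_trans (le_min le_rfl hb) hz.1).intervalIntegrable
  have hsub := integral_interval_sub_left (hint y hy) (hint x hx)
  have hxy_pos : 0 < ∫ s in x..y, f s :=
    intervalIntegral_pos_of_pos_on ((hint x hx).symm.trans (hint y hy))
      (fun z hz => hpos z (le_trans hx hz.1.le)) hxy
  dsimp only
  linarith

lemma AntitoneOn.le_div_mul_of_le {φ : ℝ → ℝ} (hanti : AntitoneOn (fun x => φ x / x) (Ici 1))
    {x y : ℝ} (hx : 1 ≤ x) (hxy : x ≤ y) : φ y ≤ y / x * φ x := by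
  have hy : 0 < y := by linarith
  have h := hanti (mem_Ici.2 hx) (mem_Ici.2 (hx.trans hxy)) hxy
  rw [div_le_iff₀ hy] at h
  linarith [div_mul_eq_mul_div y x (φ x), mul_div_assoc y (φ x) x]

-- With `A = H_φ⁻¹(t)` this is the paper's `H_φ⁻¹(H_φ(V) + t) ≤ H_φ⁻¹(t) V`.
lemma integral_one_div_add_le_integral_mul {φ : ℝ → ℝ} (hφ : ContinuousOn φ (Ici 1))
    (hpos : ∀ x ≥ (1:ℝ), 0 < φ x) (hanti : AntitoneOn (fun x => φ x / x) (Ici 1))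
    {V A : ℝ} (hV : 1 ≤ V) (hA : 1 ≤ A) :
    (∫ s in (1:ℝ)..V, 1 / φ s) + ∫ s in (1:ℝ)..A, 1 / φ s ≤ ∫ s in (1:ℝ)..V * A, 1 / φ s := by
  have hV0 : V ≠ 0 := by positivity
  have hinv : ContinuousOn (fun s => 1 / φ s) (Ici 1) :=
    continuousOn_const.div hφ fun x hx => (hpos x hx).ne'
  have hint : ∀ a b : ℝ, 1 ≤ a → 1 ≤ b → IntervalIntegrable (fun s => 1 / φ s) volume a b :=
    fun a b ha hb => (hinv.mono fun z hz => le_trans (le_min ha hb) hz.1).intervalIntegrable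
  have hVA : 1 ≤ V * A := one_le_mul_of_one_le_of_one_le hV hA
  have hsubst : (∫ s in V..V * A, 1 / φ s) = ∫ u in (1:ℝ)..A, V * (1 / φ (V * u)) := by
    rw [intervalIntegral.integral_const_mul, integral_comp_mul_left (fun s => 1 / φ s) hV0, mul_one, smul_eq_mul,
      ← mul_assoc, mul_inv_cancel₀ hV0, one_mul]
  have hscaled : IntervalIntegrable (fun u => V * (1 / φ (V * u))) volume 1 A := by
    refine ContinuousOn.intervalIntegrable (continuousOn_const.mul
      (hinv.comp (continuousOn_const.mul continuousOn_id) fun u hu => ?_))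
    rw [uIcc_of_le hA] at hu
    exact mem_Ici.2 (one_le_mul_of_one_le_of_one_le hV hu.1)
  have hmono : (∫ s in (1:ℝ)..A, 1 / φ s) ≤ ∫ u in (1:ℝ)..A, V * (1 / φ (V * u)) := by
    refine integral_mono_on hA (hint 1 A le_rfl hA) hscaled fun u hu => ?_
    have hu1 : 1 ≤ u := hu.1
    have hφu := hpos u hu1
    have hφVu := hpos (V * u) (one_le_mul_of_one_le_of_one_le hV hu1)
    have hle : φ (V * u) ≤ V * φ u := by
      have := hanti.le_div_mul_of_le hu1 (le_mul_of_one_le_left (by linarith) hV)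
      rwa [mul_div_assoc, div_self (by positivity), mul_one] at this
    rw [mul_one_div, div_le_div_iff₀ hφu hφVu]
    linarith
  rw [← integral_add_adjacent_intervals (hint 1 V le_rfl hV) (hint V (V * A) hV hVA), hsubst]
  linarith

theorem stmt_7_general (φ Hinv : ℝ → ℝ)
    (hC1 : ContDiffOn ℝ 1 φ (Set.Ici 1))
    (hpos : ∀ x ≥ (1:ℝ), 0 < φ x)
    (hratio : ∀ x y : ℝ, 1 ≤ x → x ≤ y → φ y / y ≤ φ x / x)
    (hinv_ge : ∀ t ≥ (0:ℝ), 1 ≤ Hinv t)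
    (hinv_right : ∀ t ≥ (0:ℝ), (∫ s in (1:ℝ)..(Hinv t), 1 / φ s) = t)
    (V K t D c : ℝ) (hV : 1 ≤ V) (hK : 0 ≤ K) (ht : 0 ≤ t)
    (hc : c = 0 ∨ c = 1)
    (hD : D ≤ -φ V + K * c) :
    2 * φ (Hinv ((∫ s in (1:ℝ)..V, 1 / φ s) + t))
      + 2 * (φ (Hinv ((∫ s in (1:ℝ)..V, 1 / φ s) + t)) / φ V) * D
      - φ (Hinv t)
      ≤ 2 * K * Hinv t * c - φ (Hinv t) := by
  set H : ℝ → ℝ := fun u => ∫ s in (1:ℝ)..u, 1 / φ s with hH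
  have hanti : AntitoneOn (fun x => φ x / x) (Ici 1) := fun x hx y _ hxy => hratio x y hx hxy
  have hHmono : StrictMonoOn H (Ici 1) := strictMonoOn_integral_of_pos
    (continuousOn_const.div hC1.continuousOn fun x hx => (hpos x hx).ne')
    fun x hx => one_div_pos.2 (hpos x hx)
  set A := Hinv t
  have hA : 1 ≤ A := hinv_ge t ht
  have hHV : 0 ≤ H V := by
    simpa [hH] using hHmono.monotoneOn (mem_Ici.2 le_rfl) (mem_Ici.2 hV) hV
  set W := Hinv (H V + t)
  have hW : 1 ≤ W := hinv_ge _ (by linarith)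
  have hHW : H W = H V + t := hinv_right _ (by linarith)
  have hVW : V ≤ W := (hHmono.le_iff_le hV hW).1 (by linarith)
  have hWVA : W ≤ V * A := (hHmono.le_iff_le hW (one_le_mul_of_one_le_of_one_le hV hA)).1 <| by
    have := integral_one_div_add_le_integral_mul hC1.continuousOn hpos hanti hV hA
    rw [hinv_right t ht] at this
    linarith
  have hφV := hpos V hV
  have hratio_le : φ W / φ V ≤ A := by
    rw [div_le_iff₀ hφV]
    calc φ W ≤ W / V * φ V := hanti.le_div_mul_of_le hV hVW
      _ ≤ A * φ V := by gcongr; rw [div_le_iff₀ (by linarith)]; linarith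
  have hr : 0 ≤ φ W / φ V := (div_pos (hpos W hW) hφV).le
  have hKc : 0 ≤ K * c := by rcases hc with rfl | rfl <;> simp [hK]
  have hφW : φ W / φ V * φ V = φ W := div_mul_cancel₀ _ hφV.ne'
  nlinarith [mul_le_mul_of_nonneg_left hD hr, mul_le_mul_of_nonneg_right hratio_le hKc]

theorem stmt_7 (φ Hinv : ℝ → ℝ)
    (hC1 : ContDiffOn ℝ 1 φ (Set.Ici 1))
    (hmono : StrictMonoOn φ (Set.Ici 1))
    (hconc : StrictConcaveOn ℝ (Set.Ici 1) φ)
    (hpos : ∀ x ≥ (1:ℝ), 0 < φ x)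
    (hle : ∀ x ≥ (1:ℝ), φ x ≤ x)
    (hratio : ∀ x y : ℝ, 1 ≤ x → x ≤ y → φ y / y ≤ φ x / x)
    (hinv_ge : ∀ t ≥ (0:ℝ), 1 ≤ Hinv t)
    (hinv_left : ∀ u ≥ (1:ℝ), Hinv (∫ s in (1:ℝ)..u, 1 / φ s) = u)
    (hinv_right : ∀ t ≥ (0:ℝ), (∫ s in (1:ℝ)..(Hinv t), 1 / φ s) = t)
    (V K t D c : ℝ) (hV : 1 ≤ V) (hK : 0 ≤ K) (ht : 0 ≤ t)
    (hc : c = 0 ∨ c = 1)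
    (hD : D ≤ -φ V + K * c) :
    2 * φ (Hinv ((∫ s in (1:ℝ)..V, 1 / φ s) + t))
      + 2 * (φ (Hinv ((∫ s in (1:ℝ)..V, 1 / φ s) + t)) / φ V) * D
      - φ (Hinv t)
      ≤ 2 * K * Hinv t * c - φ (Hinv t) :=
  stmt_7_general φ Hinv hC1 hpos hratio hinv_ge hinv_right V K t D c hV hK ht hc hD
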